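/- arXiv:1509.04699 — 4 statements merged into one kernel-verified Lean document; each statement's English description precedes it below -/
import Mathlib

section
/- The strict subsumption order on finite first-order terms, defined by s > t iff s is a strict instance of t (i.e., s = tθ for some substitution θ but t is not an instance of s), is well-founded. -/
/-- Finite first-order terms over a signature `F` with variables `V`. -/
inductive Tm (F V : Type) : Type
  | var : V → Tm F V
  | app : F → List (Tm F V) → Tm F V

namespace Tm
variable {F V W : Type}

/-- Application of a substitution (a map from variables to terms, extended
homomorphically) to a term. -/
def subst (σ : V → Tm F W) : Tm F V → Tm F W
  | .var x => σ x
  | .app f l => .app f (l.attach.map fun t => t.1.subst σ)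
  decreasing_by simp only [Tm.app.sizeOf_spec]; have := List.sizeOf_lt_of_mem t.2; omega

end Tm

/-- `s` subsumes `t` (`s ≥• t`) iff `s` is an instance of `t`. -/
def Subsumes {F V : Type} (s t : Tm F V) : Prop := ∃ θ : V → Tm F V, s = t.subst θ


namespace Tm
variable {F V W : Type}

def size : Tm F V → ℕ
  | .var _ => 1
  | .app _ l => 1 + (l.attach.map fun t => t.1.size).sum
  decreasing_by simp only [Tm.app.sizeOf_spec]; have := List.sizeOf_lt_of_mem t.2; omega

noncomputable def vars [DecidableEq V] : Tm F V → Finset V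
  | .var x => {x}
  | .app _ l => (l.attach.map fun t => t.1.vars).foldr (· ∪ ·) ∅
  decreasing_by simp only [Tm.app.sizeOf_spec]; have := List.sizeOf_lt_of_mem t.2; omega

theorem subst_app (σ : V → Tm F W) (f : F) (l : List (Tm F V)) :
    (Tm.app f l).subst σ = .app f (l.map (subst σ)) := by
  rw [subst, List.attach_map_val]

theorem size_app (f : F) (l : List (Tm F V)) :
    (Tm.app f l).size = 1 + (l.map size).sum := by
  rw [size, List.attach_map_val]

theorem size_pos : ∀ t : Tm F V, 1 ≤ t.size
  | .var _ => by rw [size]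
  | .app _ _ => by rw [size_app]; omega

theorem mem_foldr_union [DecidableEq V] (a : V) (L : List (Finset V)) :
    a ∈ L.foldr (· ∪ ·) ∅ ↔ ∃ s ∈ L, a ∈ s := by
  induction L with
  | nil => simp
  | cons h t ih => simp [ih]

theorem mem_vars_app [DecidableEq V] {x : V} {f : F} {l : List (Tm F V)} :
    x ∈ (Tm.app f l : Tm F V).vars ↔ ∃ u ∈ l, x ∈ u.vars := by
  rw [vars, List.attach_map_val, mem_foldr_union]
  simp

theorem card_foldr_union [DecidableEq V] (L : List (Finset V)) :
    (L.foldr (· ∪ ·) ∅).card ≤ (L.map Finset.card).sum := by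
  induction L with
  | nil => simp
  | cons h t ih =>
    simp only [List.foldr_cons, List.map_cons, List.sum_cons]
    exact le_trans (Finset.card_union_le _ _) (by omega)

theorem card_vars_le_size [DecidableEq V] : ∀ t : Tm F V, t.vars.card ≤ t.size
  | .var _ => by simp [vars, size]
  | .app f l => by
    rw [vars, List.attach_map_val, size_app]
    refine le_trans (card_foldr_union _) ?_
    rw [List.map_map]
    have h : ((l.map (Finset.card ∘ vars)).sum ≤ (l.map size).sum) :=
      List.sum_le_sum fun u hu => card_vars_le_size u
    omega
  decreasing_by simp only [Tm.app.sizeOf_spec]; have := List.sizeOf_lt_of_mem hu; omega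

theorem size_le_size_subst (σ : V → Tm F W) : ∀ t : Tm F V, t.size ≤ (t.subst σ).size
  | .var x => by rw [size, subst]; exact size_pos _
  | .app f l => by
    rw [subst_app, size_app, size_app, List.map_map]
    have h : (l.map size).sum ≤ (l.map (size ∘ subst σ)).sum :=
      List.sum_le_sum fun u hu => size_le_size_subst σ u
    omega
  decreasing_by simp only [Tm.app.sizeOf_spec]; have := List.sizeOf_lt_of_mem hu; omega


theorem size_lt_size_subst (σ : V → Tm F W) [DecidableEq V] :
    ∀ (t : Tm F V) (x : V), x ∈ t.vars → 2 ≤ (σ x).size → t.size < (t.subst σ).size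
  | .var y, x, hx, h2 => by
    rw [vars, Finset.mem_singleton] at hx
    subst hx
    rw [size, subst]; omega
  | .app f l, x, hx, h2 => by
    rw [mem_vars_app] at hx
    obtain ⟨u, hu, hxu⟩ := hx
    rw [subst_app, size_app, size_app, List.map_map]
    have h : (l.map size).sum < (l.map (size ∘ subst σ)).sum :=
      List.sum_lt_sum _ _ (fun v _ => size_le_size_subst σ v)
        ⟨u, hu, size_lt_size_subst σ u x hxu h2⟩
    omega
  decreasing_by simp only [Tm.app.sizeOf_spec]; have := List.sizeOf_lt_of_mem hu; omega

theorem vars_subst [DecidableEq V] (σ : V → Tm F V) :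
    ∀ t : Tm F V, (t.subst σ).vars = t.vars.biUnion (fun x => (σ x).vars)
  | .var x => by rw [subst, vars, Finset.singleton_biUnion]
  | .app f l => by
    rw [subst_app]
    ext y
    rw [mem_vars_app, Finset.mem_biUnion]
    constructor
    · rintro ⟨u, hu, hyu⟩
      rw [List.mem_map] at hu
      obtain ⟨v, hv, rfl⟩ := hu
      rw [vars_subst σ v, Finset.mem_biUnion] at hyu
      obtain ⟨x, hx, hyx⟩ := hyu
      exact ⟨x, mem_vars_app.2 ⟨v, hv, hx⟩, hyx⟩
    · rintro ⟨x, hx, hyx⟩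
      rw [mem_vars_app] at hx
      obtain ⟨v, hv, hxv⟩ := hx
      exact ⟨v.subst σ, List.mem_map.2 ⟨v, hv, rfl⟩,
        by rw [vars_subst σ v, Finset.mem_biUnion]; exact ⟨x, hxv, hyx⟩⟩
  decreasing_by all_goals (simp only [Tm.app.sizeOf_spec]; have := List.sizeOf_lt_of_mem hv; omega)

theorem subst_subst (σ θ : V → Tm F V) :
    ∀ t : Tm F V, (t.subst θ).subst σ = t.subst (fun x => (θ x).subst σ)
  | .var x => by rw [subst, subst]
  | .app f l => by
    rw [subst_app, subst_app, subst_app, List.map_map]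
    exact congrArg _ (List.map_congr_left fun u hu => subst_subst σ θ u)
  decreasing_by simp only [Tm.app.sizeOf_spec]; have := List.sizeOf_lt_of_mem hu; omega

theorem subst_eq_self [DecidableEq V] (ρ : V → Tm F V) :
    ∀ t : Tm F V, (∀ x ∈ t.vars, ρ x = .var x) → t.subst ρ = t
  | .var x, h => by rw [subst, h x (by rw [vars]; exact Finset.mem_singleton_self x)]
  | .app f l, h => by
    rw [subst_app]
    refine congrArg _ ?_
    have := List.map_congr_left (l := l) (f := subst ρ) (g := id)
      (fun u hu => subst_eq_self ρ u (fun x hx => h x (mem_vars_app.2 ⟨u, hu, hx⟩)))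
    rw [this, List.map_id]
  decreasing_by simp only [Tm.app.sizeOf_spec]; have := List.sizeOf_lt_of_mem hu; omega


theorem size_one_cases [DecidableEq V] (u : Tm F V) (h : u.size = 1) :
    (∃ y, u = .var y) ∨ u.vars = ∅ := by
  cases u with
  | var y => exact Or.inl ⟨y, rfl⟩
  | app f l =>
    rw [size_app] at h
    cases l with
    | nil => right; rw [vars]; simp
    | cons a l' =>
      exfalso
      have := size_pos a
      simp only [List.map_cons, List.sum_cons] at h
      omega

theorem subst_size_eq [DecidableEq V] {t : Tm F V} {θ : V → Tm F V}
    (hsize : (t.subst θ).size = t.size) : ∀ x ∈ t.vars, (θ x).size = 1 := by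
  intro x hx
  have h1 := size_pos (θ x)
  by_contra h
  have h2 : 2 ≤ (θ x).size := by omega
  have := size_lt_size_subst θ t x hx h2
  omega

theorem subsumes_back [DecidableEq V] {t : Tm F V} {θ : V → Tm F V}
    (hsize : (t.subst θ).size = t.size)
    (hcard : ((t.subst θ).vars).card = t.vars.card) :
    Subsumes t (t.subst θ) := by
  classical
  have h1 : ∀ x ∈ t.vars, (θ x).size = 1 := subst_size_eq hsize
  set g : V → V := fun x => if h : ∃ y, θ x = .var y then h.choose else x with hg
  set S : Finset V := t.vars.filter (fun x => ∃ y, θ x = .var y) with hS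
  have hgS : ∀ x ∈ S, θ x = .var (g x) := by
    intro x hx
    rw [hS, Finset.mem_filter] at hx
    rw [hg]
    simp only [dif_pos hx.2]
    exact hx.2.choose_spec
  have himage : (t.subst θ).vars = S.image g := by
    rw [vars_subst]
    ext y
    rw [Finset.mem_biUnion, Finset.mem_image]
    constructor
    · rintro ⟨x, hx, hyx⟩
      rcases size_one_cases (θ x) (h1 x hx) with ⟨z, hz⟩ | hz
      · have hxS : x ∈ S := by
          rw [hS, Finset.mem_filter]; exact ⟨hx, ⟨z, hz⟩⟩
        refine ⟨x, hxS, ?_⟩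
        have hthis := hgS x hxS
        rw [hthis, vars, Finset.mem_singleton] at hyx
        exact hyx.symm
      · rw [hz] at hyx; exact absurd hyx (Finset.notMem_empty y)
    · rintro ⟨x, hxS, rfl⟩
      have hxt : x ∈ t.vars := (Finset.mem_filter.1 hxS).1
      exact ⟨x, hxt, by rw [hgS x hxS, vars]; exact Finset.mem_singleton_self _⟩
  have hSsub : S ⊆ t.vars := Finset.filter_subset _ _
  have hcard2 : (S.image g).card = t.vars.card := by rw [← himage, hcard]
  have hcard3 : (S.image g).card ≤ S.card := Finset.card_image_le
  have hcard4 : S.card ≤ t.vars.card := Finset.card_le_card hSsub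
  have hSeq : S = t.vars := Finset.eq_of_subset_of_card_le hSsub (by omega)
  have hinj : Set.InjOn g S := Finset.card_image_iff.1 (by omega)
  set σ : V → Tm F V := fun y =>
    if h : ∃ x, x ∈ t.vars ∧ g x = y then .var h.choose else .var y with hσ
  refine ⟨σ, ?_⟩
  rw [subst_subst]
  symm
  apply subst_eq_self
  intro x hx
  have hxS : x ∈ S := hSeq ▸ hx
  rw [hgS x hxS, subst]
  have hex : ∃ x', x' ∈ t.vars ∧ g x' = g x := ⟨x, hx, rfl⟩
  rw [hσ]
  simp only [dif_pos hex]
  have hspec := hex.choose_spec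
  have : hex.choose = x := hinj (by rw [hSeq]; exact hspec.1) hxS hspec.2
  rw [this]
end Tm

/-- the strict subsumption order (`s > t` iff `s` is an instance of
`t` but `t` is not an instance of `s`) on finite first-order terms is well-founded:
the relation `t ≺ s` iff `s > t` is a well-founded relation. -/
theorem strict_subsumption_wellFounded (F V : Type) :
    WellFounded (fun t s : Tm F V => Subsumes s t ∧ ¬ Subsumes t s) := by
  classical
  refine Subrelation.wf (r := fun t s : Tm F V =>
      t.size * t.size + (t.size - t.vars.card) < s.size * s.size + (s.size - s.vars.card))
    ?_ (measure fun u : Tm F V => u.size * u.size + (u.size - u.vars.card)).wf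
  rintro t s ⟨⟨θ, rfl⟩, hns⟩
  show t.size * t.size + (t.size - t.vars.card) <
    (t.subst θ).size * (t.subst θ).size + ((t.subst θ).size - (t.subst θ).vars.card)
  have hab : t.size ≤ (t.subst θ).size := Tm.size_le_size_subst θ t
  have hnt : t.vars.card ≤ t.size := Tm.card_vars_le_size t
  have hns' : (t.subst θ).vars.card ≤ (t.subst θ).size := Tm.card_vars_le_size _
  rcases lt_or_eq_of_le hab with h | h
  · have h' : t.size + 1 ≤ (t.subst θ).size := h
    have h2 : (t.size + 1) * (t.size + 1) ≤ (t.subst θ).size * (t.subst θ).size :=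
      Nat.mul_le_mul h' h'
    have h3 : (t.size + 1) * (t.size + 1) = t.size * t.size + 2 * t.size + 1 := by ring
    omega
  · have hsize : (t.subst θ).size = t.size := h.symm
    have h1 := Tm.subst_size_eq hsize
    have hle : (t.subst θ).vars.card ≤ t.vars.card := by
      rw [Tm.vars_subst]
      refine le_trans Finset.card_biUnion_le ?_
      calc ∑ x ∈ t.vars, (θ x).vars.card ≤ ∑ _x ∈ t.vars, 1 := by
            refine Finset.sum_le_sum fun x hx => ?_
            have h4 := Tm.card_vars_le_size (θ x)
            rw [h1 x hx] at h4
            exact h4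
        _ = t.vars.card := by simp
    rcases lt_or_eq_of_le hle with h2 | h2
    · rw [hsize]; omega
    · exact absurd (Tm.subsumes_back hsize h2) hns
end

section
/- For any set D of decreasing local diagrams, the diagram rewriting relation on conversions, which replaces a local peak of some diagram in D by its associated conversion, is terminating. -/
set_option linter.deprecated false


namespace DD


variable {L : Type}

/-- Abstract word rewrite rules: the peak rule plus two auxiliary rules. -/
inductive Rule (lt : L → L → Prop) : List (L × Bool) → List (L × Bool) → Prop
  | peak {l m : L} {A Fm D Fl B : List (L × Bool)}
      (hA : ∀ s ∈ A, s.2 = true ∧ lt s.1 l)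
      (hFm : Fm = [] ∨ Fm = [(m, true)])
      (hD : ∀ s ∈ D, lt s.1 l ∨ lt s.1 m)
      (hFl : Fl = [] ∨ Fl = [(l, false)])
      (hB : ∀ s ∈ B, s.2 = false ∧ lt s.1 m) :
      Rule lt [(l, false), (m, true)] (A ++ Fm ++ D ++ Fl ++ B)
  | left {l : L} {A : List (L × Bool)} (hA : ∀ s ∈ A, s.2 = true ∧ lt s.1 l) :
      Rule lt [(l, false)] A
  | right {m : L} {B : List (L × Bool)} (hB : ∀ s ∈ B, s.2 = false ∧ lt s.1 m) :
      Rule lt [(m, true)] B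

/-- One step of word rewriting (closure of `Rule` under contexts). -/
inductive WS (lt : L → L → Prop) : List (L × Bool) → List (L × Bool) → Prop
  | base {xs ys v : List (L × Bool)} : Rule lt xs ys → WS lt (xs ++ v) (ys ++ v)
  | cons (x : L × Bool) {w w' : List (L × Bool)} : WS lt w w' → WS lt (x :: w) (x :: w')

variable (rk : L → Ordinal.{0})

open Classical in
/-- number of forward letters of rank `lam`. -/
noncomputable def cF (lam : Ordinal.{0}) : List (L × Bool) → ℕ
  | [] => 0
  | e :: t => (if e.2 = true ∧ rk e.1 = lam then 1 else 0) + cF lam t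

open Classical in
/-- number of backward letters of rank `lam`. -/
noncomputable def cB (lam : Ordinal.{0}) : List (L × Bool) → ℕ
  | [] => 0
  | e :: t => (if e.2 = false ∧ rk e.1 = lam then 1 else 0) + cB lam t

open Classical in
/-- number of inversions (backward before forward) among rank-`lam` letters. -/
noncomputable def inv (lam : Ordinal.{0}) : List (L × Bool) → ℕ
  | [] => 0
  | e :: t => (if e.2 = false ∧ rk e.1 = lam then cF rk lam t else 0) + inv lam t

/-- all ranks bounded by `lam`. -/
def Bd (lam : Ordinal.{0}) (w : List (L × Bool)) : Prop := ∀ e ∈ w, rk e.1 ≤ lam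

noncomputable def cnt (lam : Ordinal.{0}) (w : List (L × Bool)) : ℕ :=
  cF rk lam w + cB rk lam w

theorem cF_append (lam : Ordinal) (u v : List (L × Bool)) :
    cF rk lam (u ++ v) = cF rk lam u + cF rk lam v := by
  induction u with
  | nil => simp [cF]
  | cons e t ih => simp [cF, ih]; omega

theorem cB_append (lam : Ordinal) (u v : List (L × Bool)) :
    cB rk lam (u ++ v) = cB rk lam u + cB rk lam v := by
  induction u with
  | nil => simp [cB]
  | cons e t ih => simp [cB, ih]; omega

theorem inv_append (lam : Ordinal) (u v : List (L × Bool)) :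
    inv rk lam (u ++ v) = inv rk lam u + inv rk lam v + cB rk lam u * cF rk lam v := by
  induction u with
  | nil => simp [inv, cB]
  | cons e t ih =>
    simp only [List.cons_append, inv, ih, cB, cF_append]
    by_cases h : e.2 = false ∧ rk e.1 = lam
    · simp [h, cF_append, ih]; ring
    · simp [h, ih]

theorem cnt_append (lam : Ordinal) (u v : List (L × Bool)) :
    cnt rk lam (u ++ v) = cnt rk lam u + cnt rk lam v := by
  simp [cnt, cF_append, cB_append]; omega

theorem Bd_append {lam : Ordinal} {u v : List (L × Bool)} :
    Bd rk lam (u ++ v) ↔ Bd rk lam u ∧ Bd rk lam v := by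
  constructor
  · intro h; exact ⟨fun e he => h e (by simp [he]), fun e he => h e (by simp [he])⟩
  · rintro ⟨h1, h2⟩ e he; rcases List.mem_append.1 he with h | h
    · exact h1 e h
    · exact h2 e h

theorem cF_eq_zero {lam : Ordinal} {w : List (L × Bool)}
    (h : ∀ e ∈ w, ¬(e.2 = true ∧ rk e.1 = lam)) : cF rk lam w = 0 := by
  induction w with
  | nil => simp [cF]
  | cons e t ih =>
    simp only [cF]
    rw [if_neg (h e (by simp)), ih (fun e he => h e (by simp [he]))]

theorem cB_eq_zero {lam : Ordinal} {w : List (L × Bool)}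
    (h : ∀ e ∈ w, ¬(e.2 = false ∧ rk e.1 = lam)) : cB rk lam w = 0 := by
  induction w with
  | nil => simp [cB]
  | cons e t ih =>
    simp only [cB]
    rw [if_neg (h e (by simp)), ih (fun e he => h e (by simp [he]))]

theorem inv_eq_zero_of_cB {lam : Ordinal} {w : List (L × Bool)}
    (h : cB rk lam w = 0) : inv rk lam w = 0 := by
  induction w with
  | nil => simp [inv]
  | cons e t ih =>
    simp only [cB] at h
    simp only [inv]
    by_cases hg : e.2 = false ∧ rk e.1 = lam
    · rw [if_pos hg] at h; omega
    · rw [if_neg hg] at h ⊢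
      simp only [Nat.zero_add] at h
      simp [ih h]

theorem inv_eq_zero_of_cF {lam : Ordinal} {w : List (L × Bool)}
    (h : cF rk lam w = 0) : inv rk lam w = 0 := by
  induction w with
  | nil => simp [inv]
  | cons e t ih =>
    simp only [cF] at h
    have ht : cF rk lam t = 0 := by omega
    simp only [inv, ih ht]
    by_cases hg : e.2 = false ∧ rk e.1 = lam <;> simp [hg, ht]


variable {lt : L → L → Prop} {rk : L → Ordinal.{0}}
variable (hrk : ∀ ⦃a b : L⦄, lt a b → rk a < rk b)

section RuleFacts


variable {lam : Ordinal.{0}}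

include hrk

theorem Rule.bd {xs ys : List (L × Bool)} (h : Rule lt xs ys) (hb : Bd rk lam xs) :
    Bd rk lam ys := by
  cases h with
  | @peak l m A Fm D Fl B hA hFm hD hFl hB =>
    have hl : rk l ≤ lam := hb (l, false) (by simp)
    have hm : rk m ≤ lam := hb (m, true) (by simp)
    intro e he
    simp only [List.append_assoc, List.mem_append] at he
    rcases he with he | he | he | he | he
    · exact le_of_lt (lt_of_lt_of_le (hrk (hA e he).2) hl)
    · rcases hFm with rfl | rfl
      · simp at he
      · simp at he; subst he; exact hm
    · rcases hD e he with h' | h'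
      · exact le_of_lt (lt_of_lt_of_le (hrk h') hl)
      · exact le_of_lt (lt_of_lt_of_le (hrk h') hm)
    · rcases hFl with rfl | rfl
      · simp at he
      · simp at he; subst he; exact hl
    · exact le_of_lt (lt_of_lt_of_le (hrk (hB e he).2) hm)
  | left hA =>
    rename_i l
    have hl : rk l ≤ lam := hb (l, false) (by simp)
    intro e he
    exact le_of_lt (lt_of_lt_of_le (hrk (hA e he).2) hl)
  | right hB =>
    rename_i m
    have hm : rk m ≤ lam := hb (m, true) (by simp)
    intro e he
    exact le_of_lt (lt_of_lt_of_le (hrk (hB e he).2) hm)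

theorem Rule.cF_le {xs ys : List (L × Bool)} (h : Rule lt xs ys) (hb : Bd rk lam xs) :
    cF rk lam ys ≤ cF rk lam xs := by
  cases h with
  | @peak l m A Fm D Fl B hA hFm hD hFl hB =>
    have hl : rk l ≤ lam := hb (l, false) (by simp)
    have hm : rk m ≤ lam := hb (m, true) (by simp)
    have hAz : cF rk lam A = 0 := cF_eq_zero rk (fun e he hg =>
      absurd hg.2 (ne_of_lt (lt_of_lt_of_le (hrk (hA e he).2) hl)))
    have hDz : cF rk lam D = 0 := cF_eq_zero rk (fun e he hg => by
      rcases hD e he with h' | h'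
      · exact absurd hg.2 (ne_of_lt (lt_of_lt_of_le (hrk h') hl))
      · exact absurd hg.2 (ne_of_lt (lt_of_lt_of_le (hrk h') hm)))
    have hBz : cF rk lam B = 0 := cF_eq_zero rk (fun e he hg => by
      rw [(hB e he).1] at hg; simp at hg)
    have hFlz : cF rk lam Fl = 0 := by
      rcases hFl with rfl | rfl <;> simp [cF]
    simp only [cF_append, hAz, hDz, hBz, hFlz, cF, Nat.add_zero, Nat.zero_add]
    rcases hFm with rfl | rfl <;> simp [cF]
  | left hA =>
    rename_i l
    have hl : rk l ≤ lam := hb (l, false) (by simp)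
    have hAz : cF rk lam ys = 0 := cF_eq_zero rk (fun e he hg =>
      absurd hg.2 (ne_of_lt (lt_of_lt_of_le (hrk (hA e he).2) hl)))
    simp [hAz]
  | right hB =>
    rename_i m
    have hBz : cF rk lam ys = 0 := cF_eq_zero rk (fun e he hg => by
      rw [(hB e he).1] at hg; simp at hg)
    simp [hBz]

theorem Rule.cB_le {xs ys : List (L × Bool)} (h : Rule lt xs ys) (hb : Bd rk lam xs) :
    cB rk lam ys ≤ cB rk lam xs := by
  cases h with
  | @peak l m A Fm D Fl B hA hFm hD hFl hB =>
    have hl : rk l ≤ lam := hb (l, false) (by simp)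
    have hm : rk m ≤ lam := hb (m, true) (by simp)
    have hAz : cB rk lam A = 0 := cB_eq_zero rk (fun e he hg => by
      rw [(hA e he).1] at hg; simp at hg)
    have hDz : cB rk lam D = 0 := cB_eq_zero rk (fun e he hg => by
      rcases hD e he with h' | h'
      · exact absurd hg.2 (ne_of_lt (lt_of_lt_of_le (hrk h') hl))
      · exact absurd hg.2 (ne_of_lt (lt_of_lt_of_le (hrk h') hm)))
    have hBz : cB rk lam B = 0 := cB_eq_zero rk (fun e he hg =>
      absurd hg.2 (ne_of_lt (lt_of_lt_of_le (hrk (hB e he).2) hm)))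
    have hFmz : cB rk lam Fm = 0 := by
      rcases hFm with rfl | rfl <;> simp [cB]
    simp only [cB_append, hAz, hDz, hBz, hFmz, cB, Nat.add_zero, Nat.zero_add]
    rcases hFl with rfl | rfl <;> simp [cB]
  | left hA =>
    rename_i l
    have hAz : cB rk lam ys = 0 := cB_eq_zero rk (fun e he hg => by
      rw [(hA e he).1] at hg; simp at hg)
    simp [hAz]
  | right hB =>
    rename_i m
    have hm : rk m ≤ lam := hb (m, true) (by simp)
    have hBz : cB rk lam ys = 0 := cB_eq_zero rk (fun e he hg =>
      absurd hg.2 (ne_of_lt (lt_of_lt_of_le (hrk (hB e he).2) hm)))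
    simp [hBz]

theorem Rule.inv0 {xs ys : List (L × Bool)} (h : Rule lt xs ys) (hb : Bd rk lam xs) :
    inv rk lam ys = 0 := by
  cases h with
  | @peak l m A Fm D Fl B hA hFm hD hFl hB =>
    have hl : rk l ≤ lam := hb (l, false) (by simp)
    have hm : rk m ≤ lam := hb (m, true) (by simp)
    have hAz : cB rk lam A = 0 := cB_eq_zero rk (fun e he hg => by
      rw [(hA e he).1] at hg; simp at hg)
    have hDz : cB rk lam D = 0 := cB_eq_zero rk (fun e he hg => by
      rcases hD e he with h' | h'
      · exact absurd hg.2 (ne_of_lt (lt_of_lt_of_le (hrk h') hl))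
      · exact absurd hg.2 (ne_of_lt (lt_of_lt_of_le (hrk h') hm)))
    have hFmz : cB rk lam Fm = 0 := by
      rcases hFm with rfl | rfl <;> simp [cB]
    have hBcF : cF rk lam B = 0 := cF_eq_zero rk (fun e he hg => by
      rw [(hB e he).1] at hg; simp at hg)
    have hBinv : inv rk lam B = 0 := inv_eq_zero_of_cF rk hBcF
    have hFlB : inv rk lam (Fl ++ B) = 0 := by
      rcases hFl with rfl | rfl
      · simpa [inv_append, cB, inv] using hBinv
      · simp [inv_append, inv, cF, hBcF, hBinv]
    have h1 : inv rk lam (A ++ (Fm ++ (D ++ (Fl ++ B)))) = 0 := by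
      rw [inv_append, inv_append, inv_append]
      rw [hAz, hFmz, hDz, hFlB]
      rw [inv_eq_zero_of_cB rk hAz, inv_eq_zero_of_cB rk hFmz, inv_eq_zero_of_cB rk hDz]
      ring
    simpa [List.append_assoc] using h1
  | left hA =>
    rename_i l
    have hAz : cB rk lam ys = 0 := cB_eq_zero rk (fun e he hg => by
      rw [(hA e he).1] at hg; simp at hg)
    exact inv_eq_zero_of_cB rk hAz
  | right hB =>
    rename_i m
    have hBcF : cF rk lam ys = 0 := cF_eq_zero rk (fun e he hg => by
      rw [(hB e he).1] at hg; simp at hg)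
    exact inv_eq_zero_of_cF rk hBcF

end RuleFacts

/-! ### Step monotonicity -/


section WSFacts
variable {lam : Ordinal.{0}}
include hrk

theorem WS.bd {w w' : List (L × Bool)} (h : WS lt w w') (hb : Bd rk lam w) :
    Bd rk lam w' := by
  induction h with
  | @base xs ys v hr =>
    rw [Bd_append] at hb ⊢
    exact ⟨hr.bd hrk hb.1, hb.2⟩
  | cons x h ih =>
    intro e he
    rcases List.mem_cons.1 he with rfl | he
    · exact hb e (by simp)
    · exact ih (fun e' he' => hb e' (by simp [he'])) e he

theorem WS.cF_le {w w' : List (L × Bool)} (h : WS lt w w') (hb : Bd rk lam w) :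
    cF rk lam w' ≤ cF rk lam w := by
  induction h with
  | @base xs ys v hr =>
    rw [Bd_append] at hb
    simp only [cF_append]
    exact Nat.add_le_add_right (hr.cF_le hrk hb.1) _
  | cons x h ih =>
    have hb' := fun e he => hb e (List.mem_cons_of_mem x he)
    simp only [cF]
    exact Nat.add_le_add_left (ih hb') _

theorem WS.cB_le {w w' : List (L × Bool)} (h : WS lt w w') (hb : Bd rk lam w) :
    cB rk lam w' ≤ cB rk lam w := by
  induction h with
  | @base xs ys v hr =>
    rw [Bd_append] at hb
    simp only [cB_append]
    exact Nat.add_le_add_right (hr.cB_le hrk hb.1) _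
  | cons x h ih =>
    have hb' := fun e he => hb e (List.mem_cons_of_mem x he)
    simp only [cB]
    exact Nat.add_le_add_left (ih hb') _

theorem WS.inv_le {w w' : List (L × Bool)} (h : WS lt w w') (hb : Bd rk lam w) :
    inv rk lam w' ≤ inv rk lam w := by
  induction h with
  | @base xs ys v hr =>
    rw [Bd_append] at hb
    rw [inv_append, inv_append]
    have h1 := hr.inv0 hrk hb.1
    have h2 := hr.cB_le hrk hb.1
    have h3 : inv rk lam ys ≤ inv rk lam xs := by simp [h1]
    exact Nat.add_le_add (Nat.add_le_add h3 le_rfl) (Nat.mul_le_mul_right _ h2)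
  | cons x h ih =>
    have hb' := fun e he => hb e (List.mem_cons_of_mem x he)
    have hcf := WS.cF_le hrk h hb'
    simp only [inv]
    by_cases hg : x.2 = false ∧ rk x.1 = lam
    · simp only [if_pos hg]
      exact Nat.add_le_add hcf (ih hb')
    · simp only [if_neg hg]
      exact Nat.add_le_add le_rfl (ih hb')

theorem WS.cnt_le {w w' : List (L × Bool)} (h : WS lt w w') (hb : Bd rk lam w) :
    cF rk lam w' + cB rk lam w' ≤ cF rk lam w + cB rk lam w :=
  Nat.add_le_add (h.cF_le hrk hb) (h.cB_le hrk hb)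

end WSFacts

/-! ### structural helpers -/

theorem WS.append_left {w w' : List (L × Bool)} (u : List (L × Bool)) (h : WS lt w w') :
    WS lt (u ++ w) (u ++ w') := by
  induction u with
  | nil => simpa using h
  | cons x t ih => exact WS.cons x ih

theorem Rule.lhs_shape {xs ys : List (L × Bool)} (h : Rule lt xs ys) :
    (∃ a, xs = [a]) ∨ (∃ a b, xs = [a, b]) := by
  cases h with
  | peak hA hFm hD hFl hB => exact Or.inr ⟨_, _, rfl⟩
  | left hA => exact Or.inl ⟨_, rfl⟩
  | right hB => exact Or.inl ⟨_, rfl⟩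

theorem WS.not_nil {w : List (L × Bool)} (h : WS lt [] w) : False := by
  generalize hx : ([] : List (L × Bool)) = z at h
  cases h with
  | @base xs ys v hr =>
    rcases hr.lhs_shape with ⟨a, rfl⟩ | ⟨a, b, rfl⟩ <;> simp at hx
  | cons x h => simp at hx

/-- Classification of a step on `p ++ X :: s`. -/
theorem WS.classify {p s w' : List (L × Bool)} {X : L × Bool}
    (h : WS lt (p ++ X :: s) w') :
    (∃ p', WS lt p p' ∧ w' = p' ++ X :: s) ∨
    (∃ s', WS lt s s' ∧ w' = p ++ X :: s') ∨
    (∃ ys, Rule lt [X] ys ∧ w' = p ++ ys ++ s) ∨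
    (∃ f s₂ ys, s = f :: s₂ ∧ Rule lt [X, f] ys ∧ w' = p ++ ys ++ s₂) ∨
    (∃ a p₂ ys, p = p₂ ++ [a] ∧ Rule lt [a, X] ys ∧ w' = p₂ ++ ys ++ s) := by
  induction p generalizing w' with
  | nil =>
    simp only [List.nil_append] at h
    generalize hz : X :: s = z at h
    cases h with
    | @base xs ys v hr =>
      rcases hr.lhs_shape with ⟨a, rfl⟩ | ⟨a, b, rfl⟩
      · simp only [List.cons_append, List.nil_append] at hz
        injection hz with h1 h2; subst h1; subst h2
        exact Or.inr (Or.inr (Or.inl ⟨ys, hr, by simp⟩))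
      · simp only [List.cons_append, List.nil_append] at hz
        injection hz with h1 h2; subst h1
        exact Or.inr (Or.inr (Or.inr (Or.inl ⟨b, v, ys, h2 ▸ rfl, hr, by simp⟩)))
    | @cons x w w2 hws =>
      injection hz with h1 h2; subst h1; subst h2
      exact Or.inr (Or.inl ⟨w2, hws, rfl⟩)
  | cons q p₂ ih =>
    rw [List.cons_append] at h
    generalize hz : q :: (p₂ ++ X :: s) = z at h
    cases h with
    | @base xs ys v hr =>
      rcases hr.lhs_shape with ⟨a, rfl⟩ | ⟨a, b, rfl⟩
      · simp only [List.cons_append, List.nil_append] at hz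
        injection hz with h1 h2; subst h1; subst h2
        refine Or.inl ⟨ys ++ p₂, ?_, by simp⟩
        have h3 := WS.base (lt := lt) (v := p₂) hr
        simpa using h3
      · simp only [List.cons_append, List.nil_append] at hz
        injection hz with h1 h2; subst h1
        cases p₂ with
        | nil =>
          simp only [List.nil_append] at h2
          injection h2 with h3 h4; subst h3; subst h4
          exact Or.inr (Or.inr (Or.inr (Or.inr ⟨q, [], ys, by simp, hr, by simp⟩)))
        | cons b' p₃ =>
          rw [List.cons_append] at h2
          injection h2 with h3 h4; subst h3; subst h4
          refine Or.inl ⟨ys ++ p₃, ?_, by simp⟩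
          have h3 := WS.base (lt := lt) (v := p₃) hr
          simpa using h3
    | @cons x w w2 hws =>
      injection hz with h1 h2; subst h1; subst h2
      rcases ih hws with ⟨p', hp, rfl⟩ | ⟨s', hs, rfl⟩ | ⟨ys, hr, rfl⟩ |
        ⟨f, s₂, ys, hs, hr, rfl⟩ | ⟨a, p₃, ys, hp, hr, rfl⟩
      · exact Or.inl ⟨q :: p', WS.cons q hp, rfl⟩
      · exact Or.inr (Or.inl ⟨s', hs, rfl⟩)
      · exact Or.inr (Or.inr (Or.inl ⟨ys, hr, rfl⟩))
      · exact Or.inr (Or.inr (Or.inr (Or.inl ⟨f, s₂, ys, hs, hr, rfl⟩)))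
      · exact Or.inr (Or.inr (Or.inr (Or.inr
          ⟨a, q :: p₃, ys, by rw [hp, List.cons_append], hr, rfl⟩)))


/-! ### small count helpers -/

open Classical in
theorem cnt_cons (lam : Ordinal) (e : L × Bool) (t : List (L × Bool)) :
    cnt rk lam (e :: t) = (if rk e.1 = lam then 1 else 0) + cnt rk lam t := by
  obtain ⟨e1, e2⟩ := e
  cases e2 <;> by_cases h : rk e1 = lam <;> simp [cnt, cF, cB, h] <;> omega

theorem cnt_nil (lam : Ordinal) : cnt rk lam ([] : List (L × Bool)) = 0 := by
  simp [cnt, cF, cB]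

theorem cnt_eq_zero {lam : Ordinal} {w : List (L × Bool)}
    (h : ∀ e ∈ w, rk e.1 ≠ lam) : cnt rk lam w = 0 := by
  induction w with
  | nil => simp [cnt_nil]
  | cons e t ih =>
    rw [cnt_cons, if_neg (h e (by simp))]
    simpa using ih (fun e' he' => h e' (by simp [he']))

theorem ne_lam_of_cnt_zero {lam : Ordinal} {w : List (L × Bool)}
    (h : cnt rk lam w = 0) {e : L × Bool} (he : e ∈ w) : rk e.1 ≠ lam := by
  induction w with
  | nil => simp at he
  | cons x t ih =>
    rw [cnt_cons] at h
    rcases List.mem_cons.1 he with rfl | he'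
    · intro hx; rw [if_pos hx] at h; omega
    · refine ih ?_ he'
      by_cases hx : rk x.1 = lam
      · rw [if_pos hx] at h; omega
      · rw [if_neg hx] at h; omega

theorem exists_split {lam : Ordinal} {w : List (L × Bool)}
    (h : cnt rk lam w ≠ 0) :
    ∃ p X s, w = p ++ X :: s ∧ cnt rk lam p = 0 ∧ rk X.1 = lam := by
  induction w with
  | nil => simp [cnt_nil] at h
  | cons e t ih =>
    by_cases he : rk e.1 = lam
    · exact ⟨[], e, t, rfl, cnt_nil _, he⟩
    · rw [cnt_cons, if_neg he] at h
      simp only [Nat.zero_add] at h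
      obtain ⟨p, X, s, rfl, hp, hX⟩ := ih h
      exact ⟨e :: p, X, s, rfl, by rw [cnt_cons, if_neg he]; simpa using hp, hX⟩

theorem Bd_cons {lam : Ordinal} {e : L × Bool} {w : List (L × Bool)} :
    Bd rk lam (e :: w) ↔ rk e.1 ≤ lam ∧ Bd rk lam w := by
  constructor
  · intro h; exact ⟨h e (by simp), fun x hx => h x (by simp [hx])⟩
  · rintro ⟨h1, h2⟩ x hx
    rcases List.mem_cons.1 hx with rfl | hx
    · exact h1
    · exact h2 x hx

/-! ### Phase lemma, forward case -/

section Phase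

variable {lam : Ordinal.{0}} {k i : ℕ}

include hrk

theorem phaseF (hk : 1 ≤ k)
    (HESC : ∀ w', Bd rk lam w' →
      (cnt rk lam w' < k ∨ (cnt rk lam w' = k ∧ inv rk lam w' < i)) →
      Acc (fun b a => WS lt a b) w') :
    ∀ (X : L × Bool), X.2 = true → rk X.1 = lam →
    ∀ p, Acc (fun b a => WS lt a b) p → ∀ s, Acc (fun b a => WS lt a b) s →
      Bd rk lam p → cnt rk lam p = 0 → Bd rk lam s → cnt rk lam s + 1 = k →
      inv rk lam (p ++ X :: s) ≤ i → Acc (fun b a => WS lt a b) (p ++ X :: s) := by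
  intro X hX2 hXr p haccp
  induction haccp with
  | intro p hp IHp =>
    intro s haccs
    induction haccs with
    | intro s hs IHs =>
      intro hbp hcp hbs hcs hinv
      have hbw : Bd rk lam (p ++ X :: s) := by
        rw [Bd_append, Bd_cons]
        exact ⟨hbp, le_of_eq hXr, hbs⟩
      constructor
      intro w' hw'
      have hbw' : Bd rk lam w' := WS.bd hrk hw' hbw
      have hinv' : inv rk lam w' ≤ i := le_trans (WS.inv_le hrk hw' hbw) hinv
      rcases WS.classify hw' with ⟨p', hstep, rfl⟩ | ⟨s', hstep, rfl⟩ |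
        ⟨ys, hr, rfl⟩ | ⟨f, s₂, ys, hseq, hr, rfl⟩ | ⟨a, p₂, ys, hpeq, hr, rfl⟩
      · -- step inside p
        exact IHp p' hstep s (Acc.intro s hs)
          (WS.bd hrk hstep hbp)
          (Nat.le_zero.1 (hcp ▸ WS.cnt_le hrk hstep hbp))
          hbs hcs hinv'
      · -- step inside s
        have hccs' : cnt rk lam s' ≤ cnt rk lam s := WS.cnt_le hrk hstep hbs
        by_cases hEq : cnt rk lam s' = cnt rk lam s
        · exact IHs s' hstep hbp hcp (WS.bd hrk hstep hbs) (by omega) hinv'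
        · refine HESC _ hbw' (Or.inl ?_)
          rw [cnt_append, cnt_cons, if_pos hXr, hcp]
          omega
      · -- rule on [X] alone : X dies
        cases hr with
        | left hA => exact absurd hX2 (by simp)
        | right hB =>
          refine HESC _ hbw' (Or.inl ?_)
          have hcB : cnt rk lam ys = 0 := cnt_eq_zero (fun e he =>
            ne_of_lt (lt_of_lt_of_le (hrk (hB e he).2) (le_of_eq hXr)))
          rw [cnt_append, cnt_append, hcp, hcB]
          omega
      · -- peak [X, f] : impossible since X is forward
        exfalso
        cases hr
        exact absurd hX2 (by simp)
      · -- straddle peak [a, X]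
        cases hr with
        | @peak l m A Fm D Fl B hA hFm hD hFl hB =>
          have hmemp : ((l, false) : L × Bool) ∈ p := by rw [hpeq]; simp
          have hal : rk l ≤ lam := hbp _ hmemp
          have halne : rk l ≠ lam := ne_lam_of_cnt_zero hcp hmemp
          have hmr : rk m = lam := hXr
          have hcA : cnt rk lam A = 0 := cnt_eq_zero (fun e he =>
            ne_of_lt (lt_of_lt_of_le (hrk (hA e he).2) hal))
          have hcD : cnt rk lam D = 0 := cnt_eq_zero (fun e he => by
            rcases hD e he with h' | h'
            · exact ne_of_lt (lt_of_lt_of_le (hrk h') hal)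
            · exact ne_of_lt (lt_of_lt_of_le (hrk h') (le_of_eq hmr)))
          have hcB2 : cnt rk lam B = 0 := cnt_eq_zero (fun e he =>
            ne_of_lt (lt_of_lt_of_le (hrk (hB e he).2) (le_of_eq hmr)))
          have hcFl : cnt rk lam Fl = 0 := by
            rcases hFl with rfl | rfl
            · exact cnt_nil _
            · rw [cnt_cons, if_neg halne, cnt_nil]
          have hcp2 : cnt rk lam p₂ = 0 := by
            rw [hpeq, cnt_append] at hcp; omega
          rcases hFm with rfl | rfl
          · -- X died
            refine HESC _ hbw' (Or.inl ?_)
            rw [cnt_append, cnt_append, hcp2]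
            rw [show cnt rk lam (A ++ [] ++ D ++ Fl ++ B) = 0 by
              rw [cnt_append, cnt_append, cnt_append, cnt_append,
                hcA, hcD, hcFl, hcB2, cnt_nil]]
            omega
          · -- X survives: stay in phase
            have hstepp : WS lt p (p₂ ++ A) := by
              rw [hpeq]
              have hb : WS lt ([(l, false)] ++ ([] : List (L × Bool)))
                  (A ++ ([] : List (L × Bool))) := WS.base (Rule.left hA)
              simpa using WS.append_left p₂ hb
            have hEq : p₂ ++ (A ++ [(m, true)] ++ D ++ Fl ++ B) ++ s
                = (p₂ ++ A) ++ (m, true) :: (D ++ Fl ++ B ++ s) := by simp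
            rw [hEq] at hbw' hinv' ⊢
            have hbp' : Bd rk lam (p₂ ++ A) := ((Bd_append rk).1 hbw').1
            have hbs' : Bd rk lam (D ++ Fl ++ B ++ s) :=
              (Bd_cons.1 (((Bd_append rk)).1 hbw').2).2
            have hcs' : cnt rk lam (D ++ Fl ++ B ++ s) + 1 = k := by
              rw [cnt_append, cnt_append, cnt_append, hcD, hcFl, hcB2]
              simpa using hcs
            have haccs' : Acc (fun b a => WS lt a b) (D ++ Fl ++ B ++ s) :=
              HESC _ hbs' (Or.inl (by omega))
            have hcp' : cnt rk lam (p₂ ++ A) = 0 := by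
              rw [cnt_append, hcp2, hcA]
            exact IHp _ hstepp _ haccs' hbp' hcp' hbs' hcs' hinv'

end Phase

section PhaseB

variable {lam : Ordinal.{0}} {k i : ℕ}

include hrk

theorem phaseB (hk : 1 ≤ k)
    (HESC : ∀ w', Bd rk lam w' →
      (cnt rk lam w' < k ∨ (cnt rk lam w' = k ∧ inv rk lam w' < i)) →
      Acc (fun b a => WS lt a b) w') :
    ∀ (X : L × Bool), X.2 = false → rk X.1 = lam →
    ∀ s, Acc (fun b a => WS lt a b) s → ∀ p, Acc (fun b a => WS lt a b) p →
      Bd rk lam p → cnt rk lam p = 0 → Bd rk lam s → cnt rk lam s + 1 = k →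
      inv rk lam (p ++ X :: s) ≤ i → Acc (fun b a => WS lt a b) (p ++ X :: s) := by
  intro X hX2 hXr s haccs
  induction haccs with
  | intro s hs IHs =>
    intro p haccp
    induction haccp with
    | intro p hp IHp =>
      intro hbp hcp hbs hcs hinv
      have hbw : Bd rk lam (p ++ X :: s) := by
        rw [Bd_append, Bd_cons]
        exact ⟨hbp, le_of_eq hXr, hbs⟩
      constructor
      intro w' hw'
      have hbw' : Bd rk lam w' := WS.bd hrk hw' hbw
      have hinv' : inv rk lam w' ≤ i := le_trans (WS.inv_le hrk hw' hbw) hinv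
      rcases WS.classify hw' with ⟨p', hstep, rfl⟩ | ⟨s', hstep, rfl⟩ |
        ⟨ys, hr, rfl⟩ | ⟨f, s₂, ys, hseq, hr, rfl⟩ | ⟨a, p₂, ys, hpeq, hr, rfl⟩
      · -- step inside p
        exact IHp p' hstep (WS.bd hrk hstep hbp)
          (Nat.le_zero.1 (hcp ▸ WS.cnt_le hrk hstep hbp))
          hbs hcs hinv'
      · -- step inside s
        have hccs' : cnt rk lam s' ≤ cnt rk lam s := WS.cnt_le hrk hstep hbs
        by_cases hEq : cnt rk lam s' = cnt rk lam s
        · exact IHs s' hstep p (Acc.intro p hp) hbp hcp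
            (WS.bd hrk hstep hbs) (by omega) hinv'
        · refine HESC _ hbw' (Or.inl ?_)
          rw [cnt_append, cnt_cons, if_pos hXr, hcp]
          omega
      · -- rule on [X] alone : X dies
        cases hr with
        | right hB => exact absurd hX2 (by simp)
        | left hA =>
          refine HESC _ hbw' (Or.inl ?_)
          have hcA : cnt rk lam ys = 0 := cnt_eq_zero (fun e he =>
            ne_of_lt (lt_of_lt_of_le (hrk (hA e he).2) (le_of_eq hXr)))
          rw [cnt_append, cnt_append, hcp, hcA]
          omega
      · -- head peak [X, f]
        cases hr with
        | @peak l m A Fm D Fl B hA hFm hD hFl hB =>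
          -- X = (l,false), f = (m,true), s = f :: s₂
          have hlr : rk l = lam := hXr
          have hbs2 : Bd rk lam s₂ := by
            rw [hseq, Bd_cons] at hbs; exact hbs.2
          have hmle : rk m ≤ lam := by
            rw [hseq, Bd_cons] at hbs; exact hbs.1
          have hcA : cnt rk lam A = 0 := cnt_eq_zero (fun e he =>
            ne_of_lt (lt_of_lt_of_le (hrk (hA e he).2) (le_of_eq hlr)))
          have hcD : cnt rk lam D = 0 := cnt_eq_zero (fun e he => by
            rcases hD e he with h' | h'
            · exact ne_of_lt (lt_of_lt_of_le (hrk h') (le_of_eq hlr))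
            · exact ne_of_lt (lt_of_lt_of_le (hrk h') hmle))
          have hcB : cnt rk lam B = 0 := cnt_eq_zero (fun e he =>
            ne_of_lt (lt_of_lt_of_le (hrk (hB e he).2) hmle))
          by_cases hfr : rk m = lam
          · -- crossing of two maximal letters
            have hk2 : cnt rk lam s₂ + 2 = k := by
              rw [hseq, cnt_cons, if_pos hfr] at hcs; omega
            have hbys : Bd rk lam [((l : L), false), ((m : L), true)] := by
              intro e he
              rcases List.mem_cons.1 he with rfl | he
              · exact le_of_eq hlr
              · simp at he; subst he; exact le_of_eq hfr
            rcases hFm with rfl | rfl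
            · -- f-copy dropped : exit
              refine HESC _ hbw' (Or.inl ?_)
              have hcFl : cnt rk lam Fl ≤ 1 := by
                rcases hFl with rfl | rfl
                · simp [cnt_nil]
                · rw [cnt_cons, cnt_nil]; split <;> omega
              rw [cnt_append, cnt_append, hcp]
              rw [cnt_append, cnt_append, cnt_append, cnt_append, hcA, hcD, hcB, cnt_nil]
              omega
            rcases hFl with rfl | rfl
            · -- X dropped : exit
              refine HESC _ hbw' (Or.inl ?_)
              rw [cnt_append, cnt_append, hcp]
              rw [cnt_append, cnt_append, cnt_append, cnt_append, hcA, hcD, hcB,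
                cnt_nil, cnt_cons, if_pos hfr, cnt_nil]
              omega
            · -- both copies kept : count equal, inversions strictly decrease
              have hinvys : inv rk lam (A ++ [(m, true)] ++ D ++ [(l, false)] ++ B) = 0 :=
                Rule.inv0 hrk (Rule.peak hA (Or.inr rfl) hD (Or.inr rfl) hB) hbys
              refine HESC _ hbw' (Or.inr ⟨?_, ?_⟩)
              · rw [cnt_append, cnt_append, hcp]
                rw [cnt_append, cnt_append, cnt_append, cnt_append, hcA, hcD, hcB,
                  cnt_cons, if_pos hfr, cnt_nil, cnt_cons, if_pos hlr, cnt_nil]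
                omega
              · -- inv w' < i
                have hfF : cF rk lam (A ++ [(m, true)] ++ D ++ [(l, false)] ++ B)
                    = 1 := by
                  have zA : cF rk lam A = 0 := by
                    have := hcA; unfold cnt at this; omega
                  have zD : cF rk lam D = 0 := by
                    have := hcD; unfold cnt at this; omega
                  have zB : cF rk lam B = 0 := by
                    have := hcB; unfold cnt at this; omega
                  rw [cF_append, cF_append, cF_append, cF_append, zA, zD, zB]
                  simp [cF, hfr, hlr]
                have hfB : cB rk lam (A ++ [(m, true)] ++ D ++ [(l, false)] ++ B)
                    = 1 := by
                  have zA : cB rk lam A = 0 := by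
                    have := hcA; unfold cnt at this; omega
                  have zD : cB rk lam D = 0 := by
                    have := hcD; unfold cnt at this; omega
                  have zB : cB rk lam B = 0 := by
                    have := hcB; unfold cnt at this; omega
                  rw [cB_append, cB_append, cB_append, cB_append, zA, zD, zB]
                  simp [cB, hfr, hlr]
                have eOld : inv rk lam (p ++ (l, false) :: (m, true) :: s₂)
                    = inv rk lam p + (1 + cF rk lam s₂ + inv rk lam s₂)
                      + cB rk lam p * (1 + cF rk lam s₂) := by
                  rw [inv_append]
                  have : inv rk lam ((l, false) :: (m, true) :: s₂)
                      = 1 + cF rk lam s₂ + inv rk lam s₂ := by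
                    simp [inv, cF, hlr, hfr]
                  rw [this]
                  have : cF rk lam ((l, false) :: (m, true) :: s₂)
                      = 1 + cF rk lam s₂ := by
                    simp [cF, hlr, hfr]
                  rw [this]
                have eNew : inv rk lam (p ++ (A ++ [(m, true)] ++ D ++ [(l, false)] ++ B) ++ s₂)
                    = inv rk lam p + (cF rk lam s₂ + inv rk lam s₂)
                      + cB rk lam p * (1 + cF rk lam s₂) := by
                  rw [inv_append, inv_append, cB_append, hinvys, hfF, hfB]
                  ring
                rw [eNew]
                rw [hseq] at hinv
                rw [eOld] at hinv
                omega
          · -- rk m < lam : ordinary boundary consumption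
            have hcs2 : cnt rk lam s₂ + 1 = k := by
              rw [hseq, cnt_cons, if_neg hfr] at hcs; omega
            have hcFm : cnt rk lam Fm = 0 := by
              rcases hFm with rfl | rfl
              · exact cnt_nil _
              · rw [cnt_cons, if_neg hfr, cnt_nil]
            rcases hFl with rfl | rfl
            · -- X died : exit
              refine HESC _ hbw' (Or.inl ?_)
              rw [cnt_append, cnt_append, hcp]
              rw [cnt_append, cnt_append, cnt_append, cnt_append, hcA, hcD, hcB,
                hcFm, cnt_nil]
              omega
            · -- X survives : stay in phase
              have hstep2 : WS lt s (B ++ s₂) := by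
                rw [hseq]
                exact WS.base (Rule.right hB)
              have hEq : p ++ (A ++ Fm ++ D ++ [(l, false)] ++ B) ++ s₂
                  = (p ++ A ++ Fm ++ D) ++ (l, false) :: (B ++ s₂) := by simp
              rw [hEq] at hbw' hinv' ⊢
              have hbp' : Bd rk lam (p ++ A ++ Fm ++ D) := ((Bd_append rk).1 hbw').1
              have hbs' : Bd rk lam (B ++ s₂) :=
                (Bd_cons.1 (((Bd_append rk)).1 hbw').2).2
              have hcp' : cnt rk lam (p ++ A ++ Fm ++ D) = 0 := by
                rw [cnt_append, cnt_append, cnt_append, hcp, hcA, hcFm, hcD]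
              have hcs' : cnt rk lam (B ++ s₂) + 1 = k := by
                rw [cnt_append, hcB]; simpa using hcs2
              have haccp' : Acc (fun b a => WS lt a b) (p ++ A ++ Fm ++ D) :=
                HESC _ hbp' (Or.inl (by omega))
              exact IHs _ hstep2 _ haccp' hbp' hcp' hbs' hcs' hinv'
      · -- straddle peak [a, X] : impossible since X is backward
        exfalso
        cases hr
        exact absurd hX2 (by simp)

end PhaseB

/-! ### main accessibility theorem -/

variable (rk) in
noncomputable def maxRk : List (L × Bool) → Ordinal.{0}
  | [] => 0
  | e :: t => max (rk e.1) (maxRk t)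

theorem le_maxRk {w : List (L × Bool)} {e : L × Bool} (he : e ∈ w) :
    rk e.1 ≤ maxRk rk w := by
  induction w with
  | nil => simp at he
  | cons x t ih =>
    rcases List.mem_cons.1 he with rfl | he
    · exact le_max_left _ _
    · exact le_trans (ih he) (le_max_right _ _)

theorem bd_maxRk (w : List (L × Bool)) : Bd rk (maxRk rk w) w :=
  fun _ he => le_maxRk he

theorem maxRk_lt {lam : Ordinal.{0}} {w : List (L × Bool)} (hw : w ≠ [])
    (h : ∀ e ∈ w, rk e.1 < lam) : maxRk rk w < lam := by
  induction w with
  | nil => exact absurd rfl hw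
  | cons x t ih =>
    have hx := h x (by simp)
    cases t with
    | nil =>
      simp only [maxRk]
      exact max_lt hx (lt_of_le_of_lt (zero_le (a := rk x.1)) hx)
    | cons y u =>
      exact max_lt hx (ih (by simp) (fun e he => h e (by simp [he])))

include hrk in
theorem acc_of_measure :
    ∀ (t : Ordinal.{0} × ℕ × ℕ) (w : List (L × Bool)),
      Bd rk t.1 w → cnt rk t.1 w = t.2.1 → inv rk t.1 w = t.2.2 →
      Acc (fun b a => WS lt a b) w := by
  have wfT : WellFounded (Prod.Lex (· < · : Ordinal.{0} → Ordinal.{0} → Prop)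
      (Prod.Lex (· < · : ℕ → ℕ → Prop) (· < · : ℕ → ℕ → Prop))) :=
    WellFounded.prod_lex Ordinal.lt_wf
      (WellFounded.prod_lex Nat.lt_wfRel.wf Nat.lt_wfRel.wf)
  intro t
  refine wfT.induction (C := fun t => ∀ w, Bd rk t.1 w → cnt rk t.1 w = t.2.1 →
    inv rk t.1 w = t.2.2 → Acc (fun b a => WS lt a b) w) t ?_
  rintro ⟨lam, k, i⟩ IH w hbw hcw hiw
  simp only at hbw hcw hiw
  by_cases hk0 : cnt rk lam w = 0
  · cases w with
    | nil =>
      exact Acc.intro [] (fun y hy => absurd hy (fun h => (WS.not_nil h)))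
    | cons e t0 =>
      have hlt : ∀ x ∈ (e :: t0), rk x.1 < lam := fun x hx =>
        lt_of_le_of_ne (hbw x hx) (ne_lam_of_cnt_zero hk0 hx)
      have hmax : maxRk rk (e :: t0) < lam := maxRk_lt (by simp) hlt
      exact IH (maxRk rk (e :: t0), cnt rk (maxRk rk (e :: t0)) (e :: t0),
          inv rk (maxRk rk (e :: t0)) (e :: t0))
        (Prod.Lex.left _ _ hmax) (e :: t0) (bd_maxRk _) rfl rfl
  · obtain ⟨p, X, s, rfl, hp0, hXr⟩ := exists_split hk0
    subst hcw
    subst hiw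
    have hbp : Bd rk lam p := ((Bd_append rk).1 hbw).1
    have hXs := ((Bd_append rk).1 hbw).2
    have hbs : Bd rk lam s := (Bd_cons.1 hXs).2
    have hcseq : cnt rk lam (p ++ X :: s) = cnt rk lam s + 1 := by
      rw [cnt_append, cnt_cons, if_pos hXr, hp0]; omega
    have hk1 : 1 ≤ cnt rk lam (p ++ X :: s) := by omega
    have HESC : ∀ w', Bd rk lam w' →
        (cnt rk lam w' < cnt rk lam (p ++ X :: s) ∨
          (cnt rk lam w' = cnt rk lam (p ++ X :: s) ∧
            inv rk lam w' < inv rk lam (p ++ X :: s))) →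
        Acc (fun b a => WS lt a b) w' := by
      intro w' hb hor
      rcases hor with h | ⟨h1, h2⟩
      · exact IH (lam, cnt rk lam w', inv rk lam w')
          (Prod.Lex.right _ (Prod.Lex.left _ _ h)) w' hb rfl rfl
      · refine IH (lam, cnt rk lam w', inv rk lam w') ?_ w' hb rfl rfl
        rw [h1]
        exact Prod.Lex.right _ (Prod.Lex.right _ h2)
    have haccp : Acc (fun b a => WS lt a b) p :=
      HESC p hbp (Or.inl (by omega))
    have haccs : Acc (fun b a => WS lt a b) s :=
      HESC s hbs (Or.inl (by omega))
    rcases Bool.eq_false_or_eq_true X.2 with hX2 | hX2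
    · exact phaseF hrk hk1 HESC X hX2 hXr p haccp s haccs hbp hp0 hbs
        (by omega) le_rfl
    · exact phaseB hrk hk1 HESC X hX2 hXr s haccs p haccp hbp hp0 hbs
        (by omega) le_rfl

include hrk in
theorem ws_wf : WellFounded (fun b a => WS lt a b) :=
  ⟨fun w => acc_of_measure hrk
    (maxRk rk w, cnt rk (maxRk rk w) w, inv rk (maxRk rk w) w) w
    (bd_maxRk w) rfl rfl⟩

end DD



section DecreasingDiagrams

variable {α L : Type}

/-- Conversions for a labelled rewrite relation `rel`: sequences of forward and
backward labelled steps. -/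
inductive Conv (rel : L → α → α → Prop) : α → α → Type _
  | nil (a : α) : Conv rel a a
  | fwd {a b c : α} (l : L) : rel l a b → Conv rel b c → Conv rel a c
  | bwd {a b c : α} (l : L) : rel l b a → Conv rel b c → Conv rel a c

namespace Conv
variable {rel : L → α → α → Prop}

/-- Concatenation of conversions. -/
def append : ∀ {a b c : α}, Conv rel a b → Conv rel b c → Conv rel a c
  | _, _, _, .nil _, d => d
  | _, _, _, .fwd l h d, e => .fwd l h (d.append e)
  | _, _, _, .bwd l h d, e => .bwd l h (d.append e)

/-- The word of a conversion: its list of labels, each marked with its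
direction (`true` = forward). -/
def word : ∀ {a b : α}, Conv rel a b → List (L × Bool)
  | _, _, .nil _ => []
  | _, _, .fwd l _ d => (l, true) :: d.word
  | _, _, .bwd l _ d => (l, false) :: d.word

end Conv

/-- Decreasingness of a conversion word for a peak labelled `l`, `m`:
it has the shape `α · (m)= · δ · (l)=⁻¹ · β⁻¹` with labels of `α` strictly below
`l`, labels of `δ` strictly below `l` or `m`, labels of `β` strictly below `m`. -/
def DecWord (lt : L → L → Prop) (l m : L) (w : List (L × Bool)) : Prop :=
  ∃ A Fm D Fl B : List (L × Bool),
    w = A ++ Fm ++ D ++ Fl ++ B ∧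
    (∀ s ∈ A, s.2 = true ∧ lt s.1 l) ∧
    (Fm = [] ∨ Fm = [(m, true)]) ∧
    (∀ s ∈ D, lt s.1 l ∨ lt s.1 m) ∧
    (Fl = [] ∨ Fl = [(l, false)]) ∧
    (∀ s ∈ B, s.2 = false ∧ lt s.1 m)

/-- A local diagram: a local peak `left ←_llbl top →_rlbl right` together with a
conversion from `left` to `right`. -/
structure Diagram (rel : L → α → α → Prop) where
  top : α
  left : α
  right : α
  llbl : L
  rlbl : L
  lstep : rel llbl top left
  rstep : rel rlbl top right
  conv : Conv rel left right

/-- A diagram is decreasing (w.r.t. the strict order `lt` on labels) if its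
conversion word is decreasing for its peak labels. -/
def Diagram.Decreasing {rel : L → α → α → Prop} (lt : L → L → Prop) (D : Diagram rel) : Prop :=
  DecWord lt D.llbl D.rlbl D.conv.word

/-- Diagram rewriting: replace a local peak occurring in a conversion by the
conversion of a diagram of `𝒟`. -/
inductive DStep {rel : L → α → α → Prop} (𝒟 : Set (Diagram rel)) :
    ∀ {a b : α}, Conv rel a b → Conv rel a b → Prop
  | here {c : α} (D : Diagram rel) (hD : D ∈ 𝒟) (rest : Conv rel D.right c) :
      DStep 𝒟 (Conv.bwd D.llbl D.lstep (Conv.fwd D.rlbl D.rstep rest))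
        (D.conv.append rest)
  | fwd {a b c : α} (l : L) (h : rel l a b) {d e : Conv rel b c} :
      DStep 𝒟 d e → DStep 𝒟 (Conv.fwd l h d) (Conv.fwd l h e)
  | bwd {a b c : α} (l : L) (h : rel l b a) {d e : Conv rel b c} :
      DStep 𝒟 d e → DStep 𝒟 (Conv.bwd l h d) (Conv.bwd l h e)


set_option linter.deprecated false in
theorem conv_word_append {rel : L → α → α → Prop} {a b c : α}
    (u : Conv rel a b) (v : Conv rel b c) :
    (u.append v).word = u.word ++ v.word := by
  induction u with
  | nil => rfl
  | fwd l h d ih => simp [Conv.append, Conv.word, ih]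
  | bwd l h d ih => simp [Conv.append, Conv.word, ih]

theorem dstep_word {rel : L → α → α → Prop} {lt : L → L → Prop}
    {𝒟 : Set (Diagram rel)} (hdec : ∀ D ∈ 𝒟, D.Decreasing lt)
    {a b : α} {c c' : Conv rel a b} (h : DStep 𝒟 c c') :
    DD.WS lt (Conv.word c) (Conv.word c') := by
  induction h with
  | here D hD rest =>
    obtain ⟨A, Fm, Dm, Fl, B, hw, hA, hFm, hd, hFl, hB⟩ := hdec D hD
    have hstep := DD.WS.base (v := rest.word) (DD.Rule.peak hA hFm hd hFl hB)
    have e1 : (Conv.bwd D.llbl D.lstep (Conv.fwd D.rlbl D.rstep rest)).word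
        = [(D.llbl, false), (D.rlbl, true)] ++ rest.word := rfl
    have e2 : ((D.conv).append rest).word = (A ++ Fm ++ Dm ++ Fl ++ B) ++ rest.word := by
      rw [conv_word_append, hw]
    rw [e1, e2]
    exact hstep
  | fwd l h hd ih => exact DD.WS.cons _ ih
  | bwd l h hd ih => exact DD.WS.cons _ ih

/-- for any set `𝒟` of decreasing local diagrams (labels taken in
a partial quasi-order `le` whose strict part `lt` is well-founded), the diagram
rewriting relation on conversions, which replaces a local peak of some diagram
of `𝒟` by its associated conversion, is terminating. -/
theorem diagram_rewriting_terminates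
    (rel : L → α → α → Prop) (le : L → L → Prop)
    (hrefl : ∀ l, le l l) (htrans : ∀ l m n, le l m → le m n → le l n)
    (lt : L → L → Prop) (hlt : ∀ l m, lt l m ↔ le l m ∧ ¬ le m l)
    (hwf : WellFounded lt)
    (𝒟 : Set (Diagram rel)) (hdec : ∀ D ∈ 𝒟, D.Decreasing lt)
    (a b : α) :
    WellFounded (fun d e : Conv rel a b => DStep 𝒟 e d) := by
  have hrk : ∀ ⦃x y : L⦄, lt x y → (hwf.apply x).rank < (hwf.apply y).rank :=
    fun x y h => Acc.rank_lt_of_rel (hwf.apply y) h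
  have hws : WellFounded (fun y x => DD.WS lt x y) := DD.ws_wf hrk
  have hsub : Subrelation (fun d e : Conv rel a b => DStep 𝒟 e d)
      (InvImage (fun y x => DD.WS lt x y) Conv.word) := by
    intro d e h
    exact dstep_word hdec h
  exact Subrelation.wf hsub (InvImage.wf _ hws)

end DecreasingDiagrams
end

section
/- The rewrite system R = {d(x,x) → 0, f(x) → d(x, f(x)), c → f(c)} is not confluent: the term f(f(c)) rewrites both to 0 and to a set of terms (the regular tree language generated by S → d(0,S) | f(0)) none of which rewrites to 0 jointly. -/
/-- Terms over the signature `{d (binary), f (unary), c, 0 (constants)}`. -/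
inductive T18 : Type
  | d : T18 → T18 → T18
  | f : T18 → T18
  | c : T18
  | zero : T18

/-- One-step rewriting with `R = {d(x,x) → 0, f(x) → d(x, f(x)), c → f(c)}`,
closed under contexts. -/
inductive Step18 : T18 → T18 → Prop
  | dd (x : T18) : Step18 (.d x x) .zero
  | fx (x : T18) : Step18 (.f x) (.d x (.f x))
  | cc : Step18 .c (.f .c)
  | dL {s t : T18} (u : T18) : Step18 s t → Step18 (.d s u) (.d t u)
  | dR {s t : T18} (u : T18) : Step18 s t → Step18 (.d u s) (.d u t)
  | fC {s t : T18} : Step18 s t → Step18 (.f s) (.f t)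

/-- Confluence of a relation. -/
def Confluent {α : Type} (r : α → α → Prop) : Prop :=
  ∀ a b c, Relation.ReflTransGen r a b → Relation.ReflTransGen r a c →
    ∃ e, Relation.ReflTransGen r b e ∧ Relation.ReflTransGen r c e

/-- Invariant: the regular language S → f 0 | d(0, S). -/
inductive Lang18 : T18 → Prop
  | fz : Lang18 (.f .zero)
  | dz {s : T18} : Lang18 s → Lang18 (.d .zero s)

lemma zero_normal {t : T18} (h : Step18 .zero t) : False := by cases h

lemma lang_ne_zero {s : T18} (h : Lang18 s) : s ≠ .zero := by cases h <;> simp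

lemma lang_step {s t : T18} (hs : Lang18 s) (h : Step18 s t) : Lang18 t := by
  induction hs generalizing t with
  | fz =>
    cases h with
    | fx => exact .dz .fz
    | fC h => exact absurd h zero_normal
  | dz hs ih =>
    cases h with
    | dd => exact absurd rfl (lang_ne_zero hs)
    | dL _ h => exact absurd h zero_normal
    | dR _ h => exact .dz (ih h)

lemma lang_rt {s t : T18} (hs : Lang18 s) (h : Relation.ReflTransGen Step18 s t) :
    Lang18 t := by
  induction h with
  | refl => exact hs
  | tail _ h ih => exact lang_step ih h

/-- the system `{d(x,x) → 0, f(x) → d(x, f(x)), c → f(c)}` is not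
confluent: `f(f(c))` rewrites both to `0` and to `f(0)`, and these two reducts
have no common reduct. -/
theorem system_18_not_confluent :
    Relation.ReflTransGen Step18 (.f (.f .c)) .zero ∧
    Relation.ReflTransGen Step18 (.f (.f .c)) (.f .zero) ∧
    (¬ ∃ t, Relation.ReflTransGen Step18 .zero t ∧
        Relation.ReflTransGen Step18 (.f .zero) t) ∧
    ¬ Confluent Step18 := by
  have h1 : Relation.ReflTransGen Step18 (.f (.f .c)) .zero := by
    refine .head (.fx _) (.head (.dL _ (.fC .cc)) (.single (.dd _)))
  have h2 : Relation.ReflTransGen Step18 (.f (.f .c)) (.f .zero) := by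
    refine .head (.fC (.fx _)) (.head (.fC (.dL _ .cc)) (.single (.fC (.dd _))))
  have h3 : ¬ ∃ t, Relation.ReflTransGen Step18 .zero t ∧
      Relation.ReflTransGen Step18 (.f .zero) t := by
    rintro ⟨t, hz, hf⟩
    have : t = .zero := by
      cases hz.cases_head with
      | inl h => exact h.symm
      | inr h => exact absurd h.choose_spec.1 zero_normal
    exact lang_ne_zero (lang_rt .fz hf) this
  exact ⟨h1, h2, h3, fun hc => h3 (hc _ _ _ h1 h2)⟩
end

section
/- The NKH system {f(x,x) → a, f(x,c(x)) → b, g → c(g)} is not confluent: the term f(g,g) rewrites to both constants a and b, which are distinct normal forms. -/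
/-- Terms over the signature `{f (binary), c (unary), g, a, b (constants)}`. -/
inductive T19 : Type
  | f : T19 → T19 → T19
  | c : T19 → T19
  | g : T19
  | a : T19
  | b : T19

/-- One-step rewriting with the NKH system
`{f(x,x) → a, f(x,c(x)) → b, g → c(g)}`, closed under contexts. -/
inductive Step19 : T19 → T19 → Prop
  | fxx (x : T19) : Step19 (.f x x) .a
  | fxcx (x : T19) : Step19 (.f x (.c x)) .b
  | gg : Step19 .g (.c .g)
  | fL {s t : T19} (u : T19) : Step19 s t → Step19 (.f s u) (.f t u)
  | fR {s t : T19} (u : T19) : Step19 s t → Step19 (.f u s) (.f u t)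
  | cC {s t : T19} : Step19 s t → Step19 (.c s) (.c t)

/-- the NKH system `{f(x,x) → a, f(x,c(x)) → b, g → c(g)}` is not
confluent: `f(g,g)` rewrites to both constants `a` and `b`, which are distinct
normal forms. -/
theorem NKH_not_confluent :
    Relation.ReflTransGen Step19 (.f .g .g) .a ∧
    Relation.ReflTransGen Step19 (.f .g .g) .b ∧
    (T19.a ≠ T19.b) ∧
    (∀ t, ¬ Step19 .a t) ∧ (∀ t, ¬ Step19 .b t) ∧
    ¬ Confluent Step19 := by
  have h1 : Relation.ReflTransGen Step19 (.f .g .g) .a :=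
    Relation.ReflTransGen.single (Step19.fxx .g)
  have h2 : Relation.ReflTransGen Step19 (.f .g .g) .b :=
    Relation.ReflTransGen.head (Step19.fR .g Step19.gg)
      (Relation.ReflTransGen.single (Step19.fxcx .g))
  refine ⟨h1, h2, by simp, ?_, ?_, ?_⟩
  · intro t h; cases h
  · intro t h; cases h
  intro hc
  obtain ⟨e, ha, hb⟩ := hc _ _ _ h1 h2
  rcases ha.cases_head with rfl | ⟨u, hu, _⟩
  · rcases hb.cases_head with h | ⟨u, hu, _⟩
    · exact absurd h.symm (by simp)
    · cases hu
  · cases hu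
end
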